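/- Bandit feedback observability in the uniform price auction: for sorted bids b and β, and each i ∈ {1,...,K}, the event {β_{K-i+1} ∈ (b_{i+1}, b_i]} is equal to the event {x(b,β) = i and p(b,β) ≠ b_{i+1}}, where x is the allocation and p the uniform price; hence the event is measurable with respect to (determined by) the pair (x(b,β), p(b,β)), and on this event p(b,β) = β_{K-i+1}. -/

import Mathlib

open scoped Classical

/-- Allocation in the K-item standard auction. -/
noncomputable def alloc (K : ℕ) (b β : ℕ → ℝ) : ℕ :=
  Nat.findGreatest (fun k => ∀ j, 1 ≤ j → j ≤ k → β (K + 1 - j) ≤ b j) K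

/-- Uniform price: the (K+1)-th highest bid overall. -/
noncomputable def price (K : ℕ) (b β : ℕ → ℝ) : ℝ :=
  max (b (alloc K b β + 1)) (β (K - alloc K b β + 1))

/-!
Unit `j` is won iff `b j ≥ β (K + 1 - j)`. When `β (K - i + 1)` lies in `(b (i + 1), b i]`,
monotonicity makes units `1, …, i` winning and unit `i + 1` losing, so `x = i` and the price
`max (b (i + 1)) (β (K - i + 1))` is the competing bid. Conversely, if `x = i` then unit `i` is
won, and the price differs from `b (i + 1)` only when `β (K - i + 1)` exceeds it.
-/

open Set

section UniformPriceAuction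

variable {K : ℕ} {b β : ℕ → ℝ}

-- `alloc` is built with the classical decidability instance, which has to be supplied explicitly.
theorem alloc_le (K : ℕ) (b β : ℕ → ℝ) : alloc K b β ≤ K :=
  @Nat.findGreatest_le _ (fun _ => Classical.propDecidable _) K

theorem alloc_feasible {j : ℕ} (hj1 : 1 ≤ j) (hj : j ≤ alloc K b β) :
    β (K + 1 - j) ≤ b j :=
  @Nat.findGreatest_spec 0 (fun k => ∀ j, 1 ≤ j → j ≤ k → β (K + 1 - j) ≤ b j)
    (fun _ => Classical.propDecidable _) K (Nat.zero_le K)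
    (fun _ h h' => absurd (h.trans h') (by omega)) j hj1 hj

theorem le_alloc {i : ℕ} (hiK : i ≤ K) (h : ∀ j, 1 ≤ j → j ≤ i → β (K + 1 - j) ≤ b j) :
    i ≤ alloc K b β :=
  @Nat.le_findGreatest i _ (fun _ => Classical.propDecidable _) K hiK h

theorem alloc_le_of_lt (hβ : AntitoneOn β (Icc 1 K)) {i : ℕ} (hi1 : 1 ≤ i)
    (h : b (i + 1) < β (K - i + 1)) : alloc K b β ≤ i := by
  by_contra! hlt
  have hiK : i < K := hlt.trans_le (alloc_le K b β)
  have hfeas : β (K - i) ≤ b (i + 1) := by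
    simpa [show K + 1 - (i + 1) = K - i by omega] using alloc_feasible (by omega) hlt
  have hβi : β (K - i + 1) ≤ β (K - i) :=
    hβ ⟨by omega, by omega⟩ ⟨by omega, by omega⟩ (Nat.le_succ _)
  linarith

theorem alloc_eq_of_mem_Ioc (hb : AntitoneOn b (Icc 1 K)) (hβ : AntitoneOn β (Icc 1 K))
    {i : ℕ} (hi1 : 1 ≤ i) (hiK : i ≤ K) (h : β (K - i + 1) ∈ Ioc (b (i + 1)) (b i)) :
    alloc K b β = i := by
  refine le_antisymm (alloc_le_of_lt hβ hi1 h.1) (le_alloc hiK fun j hj1 hji => ?_)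
  calc β (K + 1 - j) ≤ β (K - i + 1) := hβ ⟨by omega, by omega⟩ ⟨by omega, by omega⟩ (by omega)
    _ ≤ b i := h.2
    _ ≤ b j := hb ⟨hj1, hji.trans hiK⟩ ⟨hi1, hiK⟩ hji

theorem price_eq_of_mem_Ioc (hb : AntitoneOn b (Icc 1 K)) (hβ : AntitoneOn β (Icc 1 K))
    {i : ℕ} (hi1 : 1 ≤ i) (hiK : i ≤ K) (h : β (K - i + 1) ∈ Ioc (b (i + 1)) (b i)) :
    price K b β = β (K - i + 1) := by
  rw [price, alloc_eq_of_mem_Ioc hb hβ hi1 hiK h]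
  exact max_eq_right h.1.le

theorem mem_Ioc_of_alloc_eq {i : ℕ} (hi1 : 1 ≤ i) (halloc : alloc K b β = i)
    (hprice : price K b β ≠ b (i + 1)) : β (K - i + 1) ∈ Ioc (b (i + 1)) (b i) := by
  subst halloc
  refine ⟨lt_of_not_ge fun hle => hprice (max_eq_left hle), ?_⟩
  simpa [show K + 1 - alloc K b β = K - alloc K b β + 1 by have := alloc_le K b β; omega]
    using alloc_feasible hi1 le_rfl

end UniformPriceAuction

theorem uniform_bandit_feedback_general (K : ℕ) (b β : ℕ → ℝ)
    (hb : ∀ i j, 1 ≤ i → i ≤ j → j ≤ K → b j ≤ b i)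
    (hβ : ∀ i j, 1 ≤ i → i ≤ j → j ≤ K → β j ≤ β i)
    (i : ℕ) (hi1 : 1 ≤ i) (hiK : i ≤ K) :
    ((b (i + 1) < β (K - i + 1) ∧ β (K - i + 1) ≤ b i)
        ↔ (alloc K b β = i ∧ price K b β ≠ b (i + 1)))
      ∧ (b (i + 1) < β (K - i + 1) ∧ β (K - i + 1) ≤ b i → price K b β = β (K - i + 1)) := by
  have hb' : AntitoneOn b (Icc 1 K) := fun m hm n hn hmn => hb m n hm.1 hmn hn.2
  have hβ' : AntitoneOn β (Icc 1 K) := fun m hm n hn hmn => hβ m n hm.1 hmn hn.2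
  have hprice := price_eq_of_mem_Ioc hb' hβ' hi1 hiK
  refine ⟨⟨fun h => ⟨alloc_eq_of_mem_Ioc hb' hβ' hi1 hiK h, ?_⟩,
    fun h => mem_Ioc_of_alloc_eq hi1 h.1 h.2⟩, hprice⟩
  rw [hprice h]
  exact h.1.ne'

/-- Bandit-feedback observability in the uniform price auction: the event
`β (K-i+1) ∈ (b (i+1), b i]` coincides with the observable event
`x = i ∧ p ≠ b (i+1)`, and on this event the price equals `β (K-i+1)`. -/
theorem uniform_bandit_feedback (K : ℕ) (b β : ℕ → ℝ)
    (hb : ∀ i j, 1 ≤ i → i ≤ j → j ≤ K → b j ≤ b i)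
    (hb01 : ∀ i, 1 ≤ i → i ≤ K → b i ∈ Set.Icc (0:ℝ) 1)
    (hβ : ∀ i j, 1 ≤ i → i ≤ j → j ≤ K → β j ≤ β i)
    (hβ01 : ∀ i, 1 ≤ i → i ≤ K → β i ∈ Set.Icc (0:ℝ) 1)
    (hbK1 : b (K + 1) = 0)
    (i : ℕ) (hi1 : 1 ≤ i) (hiK : i ≤ K) :
    ((b (i + 1) < β (K - i + 1) ∧ β (K - i + 1) ≤ b i)
        ↔ (alloc K b β = i ∧ price K b β ≠ b (i + 1)))
      ∧ (b (i + 1) < β (K - i + 1) ∧ β (K - i + 1) ≤ b i → price K b β = β (K - i + 1)) :=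
  uniform_bandit_feedback_general K b β hb hβ i hi1 hiK
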